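/- Let G be a connected r-regular graph with r ≥ 2, with n vertices and m edges (so m = nr/2 ≥ n), and for each i = 1,…,n let H_i be an r_i-regular graph on t_i ≥ 1 vertices. Then 1 is an eigenvalue of the normalized Laplacian of the generalized subdivision-vertex corona S(G)⊙∧_{i=1}^n H_i of multiplicity at least m − n; equivalently, (x − 1)^{m−n} divides the characteristic polynomial of 𝓛(S(G)⊙∧_{i=1}^n H_i). -/

import Mathlib

/-!
The inserted vertices `I(G)` are pairwise non-adjacent and all their neighbours are among the `n`
original vertices. Hence a vector supported on `I(G)` is killed by `D^{-1/2} A D^{-1/2}`, i.e. is a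
`1`-eigenvector of `𝓛`, as soon as it satisfies `n` linear conditions, one per original vertex.
So the `1`-eigenspace has dimension at least `m - n`, and the geometric multiplicity of an
eigenvalue is at most its algebraic multiplicity.
-/

open Matrix Polynomial

/-- Adjacency matrix over `ℝ` (with classical decidability). -/
noncomputable def adjM {V : Type*} [Fintype V] [DecidableEq V] (G : SimpleGraph V) :
    Matrix V V ℝ :=
  letI : DecidableRel G.Adj := Classical.decRel _
  G.adjMatrix ℝ

/-- Degree of a vertex (with classical decidability). -/
noncomputable def cdeg {V : Type*} [Fintype V] (G : SimpleGraph V) (v : V) : ℕ :=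
  letI : DecidableRel G.Adj := Classical.decRel _
  G.degree v

/-- The normalized Laplacian `𝓛(G) = I - D^{-1/2} A D^{-1/2}` of a finite graph. -/
noncomputable def normLap {V : Type*} [Fintype V] [DecidableEq V] (G : SimpleGraph V) :
    Matrix V V ℝ :=
  1 - Matrix.diagonal (fun v => (Real.sqrt (cdeg G v))⁻¹) * adjM G
      * Matrix.diagonal (fun v => (Real.sqrt (cdeg G v))⁻¹)

/-- The generalized subdivision-vertex corona `S(G) ⊙ ∧ᵢ Hᵢ`: take the subdivision `S(G)`
(vertices of `G` together with one inserted vertex per edge, each edge `uv` replaced by the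
path `u–e–v`), add a disjoint copy of each `Hᵢ`, and join the `i`-th vertex of `G` to every
vertex of `Hᵢ`. -/
def svc {n : ℕ} (G : SimpleGraph (Fin n)) (t : Fin n → ℕ)
    (H : ∀ i : Fin n, SimpleGraph (Fin (t i))) :
    SimpleGraph (Fin n ⊕ (G.edgeSet ⊕ Σ i : Fin n, Fin (t i))) :=
  SimpleGraph.fromRel (fun a b =>
    match a, b with
    | Sum.inl v, Sum.inr (Sum.inl e) => v ∈ (e : Sym2 (Fin n))
    | Sum.inl v, Sum.inr (Sum.inr ⟨i, _⟩) => v = i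
    | Sum.inr (Sum.inr ⟨i, w⟩), Sum.inr (Sum.inr ⟨j, w'⟩) =>
        ∃ h : i = j, (H j).Adj (h ▸ w) w'
    | _, _ => False)

open Module

namespace Matrix

variable {K : Type*} [Field K] {m n ι κ : Type*} [Fintype n] [Fintype ι] [Fintype κ]

lemma mulVec_extend_zero {i : ι → n} (hi : i.Injective) (A : Matrix m n K) (y : ι → K) :
    A *ᵥ Function.extend i y 0 = A.submatrix id i *ᵥ y := by
  ext v
  refine (Fintype.sum_of_injective i hi _ _ (fun w hw => ?_) (fun u => ?_)).symm
  · simp [Function.extend_apply' _ _ _ (by simpa using hw)]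
  · simp [hi.extend_apply]

lemma card_sub_card_le_finrank_ker {i : ι → n} (hi : i.Injective) (j : κ → m)
    (A : Matrix m n K) (hA : ∀ v u, A v (i u) ≠ 0 → v ∈ Set.range j) :
    Fintype.card ι - Fintype.card κ ≤ finrank K (LinearMap.ker A.mulVecLin) := by
  set B := A.submatrix j i
  have hB : Fintype.card ι - Fintype.card κ ≤ finrank K (LinearMap.ker B.mulVecLin) := by
    have hsum := B.mulVecLin.finrank_range_add_finrank_ker
    have hrank : B.rank ≤ Fintype.card κ := B.rank_le_card_height
    rw [finrank_fintype_fun_eq_card] at hsum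
    rw [Matrix.rank] at hrank
    omega
  set E := Function.ExtendByZero.linearMap K i
  have hE : (LinearMap.ker B.mulVecLin).map E ≤ LinearMap.ker A.mulVecLin := by
    rintro _ ⟨y, hy, rfl⟩
    simp only [SetLike.mem_coe, LinearMap.mem_ker, Matrix.mulVecLin_apply] at hy ⊢
    ext v
    change (A *ᵥ Function.extend i y 0) v = 0
    rw [mulVec_extend_zero hi]
    by_cases hv : v ∈ Set.range j
    · obtain ⟨k, rfl⟩ := hv
      exact congrFun hy k
    · exact Finset.sum_eq_zero fun u _ => by
        simp [not_imp_comm.mp (hA v u) hv]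
  calc _ ≤ finrank K (LinearMap.ker B.mulVecLin) := hB
    _ = finrank K ((LinearMap.ker B.mulVecLin).map E) :=
      (LinearEquiv.finrank_eq (Submodule.equivMapOfInjective E
        (Function.extend_injective hi (0 : n → K)) _))
    _ ≤ _ := Submodule.finrank_mono hE

variable [DecidableEq n]

lemma X_sub_C_pow_dvd_charpoly {A : Matrix n n K} {μ : K} {k : ℕ}
    (hk : k ≤ finrank K (Module.End.eigenspace (toLin' A) μ)) :
    (X - C μ) ^ k ∣ A.charpoly := by
  rw [← charpoly_toLin']
  exact (pow_dvd_pow _ (hk.trans (LinearMap.finrank_eigenspace_le _ μ))).trans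
    (pow_rootMultiplicity_dvd _ _)

lemma eigenspace_toLin'_one_sub (N : Matrix n n K) :
    Module.End.eigenspace (toLin' (1 - N)) 1 = LinearMap.ker N.mulVecLin := by
  ext x
  simp

end Matrix

lemma diagonal_mul_adjM_mul_diagonal_apply_of_not_adj {V : Type*} [Fintype V] [DecidableEq V]
    {G : SimpleGraph V} (d : V → ℝ) {v u : V} (h : ¬ G.Adj v u) :
    (diagonal d * adjM G * diagonal d) v u = 0 := by
  simp only [adjM, mul_diagonal, diagonal_mul, SimpleGraph.adjMatrix_apply, if_neg h, mul_zero,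
    zero_mul]

lemma mem_range_inl_of_svc_adj_inr_inl {n : ℕ} {G : SimpleGraph (Fin n)} {t : Fin n → ℕ}
    {H : ∀ i : Fin n, SimpleGraph (Fin (t i))}
    {x : Fin n ⊕ (G.edgeSet ⊕ Σ i : Fin n, Fin (t i))} {e : G.edgeSet}
    (h : (svc G t H).Adj x (Sum.inr (Sum.inl e))) : x ∈ Set.range Sum.inl := by
  rcases x with v | e' | p
  · exact ⟨v, rfl⟩
  all_goals simp [svc] at h

theorem stmt3 {n m : ℕ}
    (G : SimpleGraph (Fin n)) [DecidableRel G.Adj]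
    (hm : G.edgeFinset.card = m)
    (t : Fin n → ℕ) (H : ∀ i : Fin n, SimpleGraph (Fin (t i))) :
    ((X : Polynomial ℝ) - 1) ^ (m - n) ∣ (normLap (svc G t H)).charpoly := by
  set N := diagonal (fun v => (Real.sqrt (cdeg (svc G t H) v))⁻¹) * adjM (svc G t H) *
    diagonal (fun v => (Real.sqrt (cdeg (svc G t H) v))⁻¹)
  have hcard : Fintype.card G.edgeSet = m := by
    rw [← hm, SimpleGraph.edgeFinset, Set.toFinset_card]
  have hnull : m - n ≤ finrank ℝ (LinearMap.ker N.mulVecLin) := by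
    simpa [hcard] using card_sub_card_le_finrank_ker (Sum.inr_injective.comp Sum.inl_injective)
      Sum.inl N fun v e hN => mem_range_inl_of_svc_adj_inr_inl <| by_contra fun h => hN <|
        diagonal_mul_adjM_mul_diagonal_apply_of_not_adj _ h
  rw [← C_1]
  exact X_sub_C_pow_dvd_charpoly ((eigenspace_toLin'_one_sub N).symm ▸ hnull)
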